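/- Let ẽ be uniformly distributed on the unit ℓ₁-ball B₁^d(1) ⊂ ℝ^d. Then E[‖ẽ‖₂] ≤ 2/√d. -/

import Mathlib

/-!
Let `B` be the unit `ℓ¹`-ball in `ℝ^d`. For `0 ≤ t < 1`, the cap `{x ∈ B | t < xᵢ}` lies in the
translate `t eᵢ + (1 - t) B`, so it occupies at most a fraction `(1 - t)^d` of `B`; by symmetry
`P(t < |xᵢ|) ≤ 2 (1 - t)^d`. The layer-cake formula then gives
`E[xᵢ²] ≤ ∫₀¹ 2t · 2(1 - t)^d dt = 4 / ((d + 1)(d + 2))`, hence `E‖x‖² ≤ 4/d`, and Jensen's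
inequality `(E‖x‖)² ≤ E‖x‖²` finishes the proof.
-/

open MeasureTheory Set Pointwise

variable {ι : Type*} [Fintype ι]

variable (ι) in
def l1Ball : Set (EuclideanSpace ℝ ι) := {x | ∑ i, |x i| ≤ 1}

lemma EuclideanSpace.norm_le_sum_abs (x : EuclideanSpace ℝ ι) : ‖x‖ ≤ ∑ i, |x i| := by
  classical
  calc ‖x‖ = ‖∑ i, EuclideanSpace.single i (x i)‖ := by
        congr 1; ext j; simp
    _ ≤ ∑ i, ‖EuclideanSpace.single i (x i)‖ := norm_sum_le _ _
    _ = ∑ i, |x i| := by simp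

lemma abs_le_one_of_mem_l1Ball {x : EuclideanSpace ℝ ι} (hx : x ∈ l1Ball ι) (i : ι) :
    |x i| ≤ 1 :=
  (Finset.single_le_sum (fun j _ => abs_nonneg (x j)) (Finset.mem_univ i)).trans hx

lemma isCompact_l1Ball : IsCompact (l1Ball ι) :=
  Metric.isCompact_of_isClosed_isBounded (isClosed_le (by fun_prop) continuous_const)
    ((Metric.isBounded_closedBall (x := 0) (r := 1)).subset fun x hx => by
      simpa using (EuclideanSpace.norm_le_sum_abs x).trans hx)

lemma measurableSet_l1Ball : MeasurableSet (l1Ball ι) :=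
  isCompact_l1Ball.isClosed.measurableSet

lemma volume_l1Ball_pos : 0 < volume (l1Ball ι) := by
  have hopen : IsOpen {x : EuclideanSpace ℝ ι | ∑ i, |x i| < 1} :=
    isOpen_lt (by fun_prop) continuous_const
  have hsub : {x : EuclideanSpace ℝ ι | ∑ i, |x i| < 1} ⊆ l1Ball ι :=
    fun _ hx => le_of_lt (α := ℝ) hx
  exact (hopen.measure_pos volume ⟨0, by simp⟩).trans_le (measure_mono hsub)

lemma sum_abs_sub_single [DecidableEq ι] (x : EuclideanSpace ℝ ι) {i : ι} {t : ℝ} (ht : 0 ≤ t)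
    (hti : t ≤ x i) : ∑ j, |(x - EuclideanSpace.single i t) j| = ∑ j, |x j| - t := by
  have hcoord : ∀ j, |(x - EuclideanSpace.single i t) j| = |x j| - (Pi.single i t : ι → ℝ) j := by
    intro j
    by_cases h : j = i
    · subst h; simp [abs_of_nonneg (ht.trans hti), abs_of_nonneg (sub_nonneg.2 hti)]
    · simp [h]
  rw [Finset.sum_congr rfl fun j _ => hcoord j, Finset.sum_sub_distrib, Finset.sum_pi_single']
  simp

lemma inter_coord_gt_subset_vadd_smul [DecidableEq ι] (i : ι) {t : ℝ} (ht0 : 0 ≤ t)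
    (ht1 : t < 1) :
    {x | t < x i} ∩ l1Ball ι ⊆ EuclideanSpace.single i t +ᵥ (1 - t) • l1Ball ι := by
  rintro x ⟨hxi, hx⟩
  rw [mem_vadd_set_iff_neg_vadd_mem, mem_smul_set_iff_inv_smul_mem₀ (by linarith)]
  change ∑ j, |((1 - t)⁻¹ • (-EuclideanSpace.single i t + x)) j| ≤ 1
  simp only [PiLp.smul_apply, smul_eq_mul, abs_mul, ← Finset.mul_sum, neg_add_eq_sub,
    sum_abs_sub_single x ht0 hxi.le, abs_of_pos (inv_pos.2 (sub_pos.2 ht1))]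
  rw [inv_mul_le_iff₀ (sub_pos.2 ht1)]
  linarith [show ∑ j, |x j| ≤ 1 from hx]

lemma volume_inter_coord_gt_le (i : ι) {t : ℝ} (ht0 : 0 ≤ t) (ht1 : t < 1) :
    volume ({x | t < x i} ∩ l1Ball ι)
      ≤ ENNReal.ofReal ((1 - t) ^ Fintype.card ι) * volume (l1Ball ι) := by
  classical
  calc volume ({x | t < x i} ∩ l1Ball ι)
      ≤ volume (EuclideanSpace.single i t +ᵥ (1 - t) • l1Ball ι) :=
        measure_mono (inter_coord_gt_subset_vadd_smul i ht0 ht1)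
    _ = volume ((1 - t) • l1Ball ι) := measure_vadd _ _ _
    _ = ENNReal.ofReal ((1 - t) ^ Fintype.card ι) * volume (l1Ball ι) := by
        rw [Measure.addHaar_smul_of_nonneg _ (by linarith), finrank_euclideanSpace]

lemma volume_inter_abs_coord_gt_le (i : ι) {t : ℝ} (ht0 : 0 ≤ t) (ht1 : t < 1) :
    volume ({x | t < |x i|} ∩ l1Ball ι)
      ≤ 2 * ENNReal.ofReal ((1 - t) ^ Fintype.card ι) * volume (l1Ball ι) := by
  set S := {x : EuclideanSpace ℝ ι | t < x i} ∩ l1Ball ι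
  have hsub : {x | t < |x i|} ∩ l1Ball ι ⊆ S ∪ -S := by
    rintro x ⟨hxi, hx⟩
    simp only [S, l1Ball, mem_union, mem_neg, mem_inter_iff, mem_ofPred_eq, PiLp.neg_apply,
      abs_neg] at hxi hx ⊢
    rcases lt_abs.1 hxi with h | h
    · exact Or.inl ⟨h, hx⟩
    · exact Or.inr ⟨h, hx⟩
  calc volume ({x | t < |x i|} ∩ l1Ball ι) ≤ volume (S ∪ -S) := measure_mono hsub
    _ ≤ volume S + volume (-S) := measure_union_le _ _
    _ = 2 * volume S := by rw [Measure.measure_neg, two_mul]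
    _ ≤ 2 * (ENNReal.ofReal ((1 - t) ^ Fintype.card ι) * volume (l1Ball ι)) :=
        mul_le_mul_right (volume_inter_coord_gt_le i ht0 ht1) 2
    _ = _ := (mul_assoc _ _ _).symm

lemma volume_inter_abs_coord_gt_eq_zero (i : ι) {t : ℝ} (ht : 1 ≤ t) :
    volume ({x | t < |x i|} ∩ l1Ball ι) = 0 := by
  have hempty : {x | t < |x i|} ∩ l1Ball ι = ∅ := eq_empty_of_forall_notMem fun x ⟨hxi, hx⟩ =>
    (abs_le_one_of_mem_l1Ball hx i).not_gt (ht.trans_lt hxi)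
  rw [hempty, measure_empty]

lemma lintegral_sq_coord_l1Ball_eq (i : ι) :
    ∫⁻ x in l1Ball ι, ENNReal.ofReal (x i ^ 2)
      = ∫⁻ t in Ioo 0 1, volume ({x | t < |x i|} ∩ l1Ball ι) * ENNReal.ofReal (2 * t) := by
  have hprimitive (a : ℝ) : ∫ t in (0 : ℝ)..a, 2 * t = a ^ 2 := by
    rw [intervalIntegral.integral_const_mul, integral_id]
    ring
  have hlayer := lintegral_comp_eq_lintegral_meas_lt_mul (volume.restrict (l1Ball ι))
    (f := fun x => |x i|) (g := fun t => 2 * t) (ae_of_all _ fun x => abs_nonneg _)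
    (by fun_prop) (fun t _ => (continuous_const_mul 2).intervalIntegrable 0 t)
    (ae_restrict_of_forall_mem measurableSet_Ioi fun t (ht : 0 < t) => by positivity)
  simp only [hprimitive, sq_abs, Measure.restrict_apply' measurableSet_l1Ball] at hlayer
  rw [hlayer, ← Ioo_union_Ici_eq_Ioi one_pos, lintegral_union measurableSet_Ici
    ((Iio_disjoint_Ici le_rfl).mono_left Ioo_subset_Iio_self),
    setLIntegral_congr_fun (g := fun _ => 0) measurableSet_Ici
      (fun t ht => by simp [volume_inter_abs_coord_gt_eq_zero i ht]),
    lintegral_zero, add_zero]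

lemma integral_mul_one_sub_pow (n : ℕ) :
    ∫ t in (0 : ℝ)..1, t * (1 - t) ^ n = 1 / ((n + 1) * (n + 2)) := by
  have hflip : ∫ t in (0 : ℝ)..1, t * (1 - t) ^ n = ∫ u in (0 : ℝ)..1, (u ^ n - u ^ (n + 1)) := by
    have := intervalIntegral.integral_comp_sub_left (fun u : ℝ => u ^ n - u ^ (n + 1))
      (a := 0) (b := 1) 1
    simp only [sub_zero, sub_self] at this
    rw [← this]
    congr 1; ext t; ring
  rw [hflip, intervalIntegral.integral_sub (intervalIntegral.intervalIntegrable_pow n)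
    (intervalIntegral.intervalIntegrable_pow (n + 1)), integral_pow, integral_pow]
  push_cast
  field_simp
  ring

lemma lintegral_sq_coord_l1Ball_le (i : ι) :
    ∫⁻ x in l1Ball ι, ENNReal.ofReal (x i ^ 2)
      ≤ ENNReal.ofReal (4 / ((Fintype.card ι + 1) * (Fintype.card ι + 2))) * volume (l1Ball ι) := by
  set n := Fintype.card ι
  have hbound : ∀ t ∈ Ioo (0 : ℝ) 1, volume ({x | t < |x i|} ∩ l1Ball ι) * ENNReal.ofReal (2 * t)
      ≤ ENNReal.ofReal (4 * (t * (1 - t) ^ n)) * volume (l1Ball ι) := by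
    rintro t ⟨ht0, ht1⟩
    have hpow : 0 ≤ (1 - t) ^ n := pow_nonneg (by linarith) n
    calc volume ({x | t < |x i|} ∩ l1Ball ι) * ENNReal.ofReal (2 * t)
        ≤ 2 * ENNReal.ofReal ((1 - t) ^ n) * volume (l1Ball ι) * ENNReal.ofReal (2 * t) :=
          mul_le_mul_left (volume_inter_abs_coord_gt_le i ht0.le ht1) _
      _ = ENNReal.ofReal (4 * (t * (1 - t) ^ n)) * volume (l1Ball ι) := by
          rw [show 4 * (t * (1 - t) ^ n) = 2 * (1 - t) ^ n * (2 * t) by ring,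
            ENNReal.ofReal_mul (mul_nonneg zero_le_two hpow),
            ENNReal.ofReal_mul zero_le_two, ENNReal.ofReal_mul zero_le_two, ENNReal.ofReal_ofNat]
          ring
  have hintegrand_nonneg : ∀ t ∈ Ioo (0 : ℝ) 1, 0 ≤ 4 * (t * (1 - t) ^ n) := fun t ⟨ht0, ht1⟩ =>
    have : 0 ≤ (1 - t) ^ n := pow_nonneg (by linarith) n
    by positivity
  calc ∫⁻ x in l1Ball ι, ENNReal.ofReal (x i ^ 2)
      = ∫⁻ t in Ioo 0 1, volume ({x | t < |x i|} ∩ l1Ball ι) * ENNReal.ofReal (2 * t) :=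
        lintegral_sq_coord_l1Ball_eq i
    _ ≤ ∫⁻ t in Ioo 0 1, ENNReal.ofReal (4 * (t * (1 - t) ^ n)) * volume (l1Ball ι) :=
        setLIntegral_mono (by fun_prop) hbound
    _ = ENNReal.ofReal (∫ t in (0 : ℝ)..1, 4 * (t * (1 - t) ^ n)) * volume (l1Ball ι) := by
        rw [lintegral_mul_const _ (by fun_prop), intervalIntegral.integral_of_le zero_le_one,
          integral_Ioc_eq_integral_Ioo, ofReal_integral_eq_lintegral_ofReal
            ((Continuous.integrableOn_Icc (by fun_prop)).mono_set Ioo_subset_Icc_self)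
            (ae_restrict_of_forall_mem measurableSet_Ioo hintegrand_nonneg)]
    _ = _ := by
        rw [intervalIntegral.integral_const_mul, integral_mul_one_sub_pow]
        ring_nf

lemma integral_sq_coord_l1Ball_le (i : ι) :
    ∫ x in l1Ball ι, x i ^ 2
      ≤ 4 / ((Fintype.card ι + 1) * (Fintype.card ι + 2)) * volume.real (l1Ball ι) := by
  have hfinite : ENNReal.ofReal (4 / ((Fintype.card ι + 1) * (Fintype.card ι + 2)))
      * volume (l1Ball ι) ≠ ⊤ :=
    ENNReal.mul_ne_top ENNReal.ofReal_ne_top isCompact_l1Ball.measure_lt_top.ne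
  rw [integral_eq_lintegral_of_nonneg_ae (f := fun x : EuclideanSpace ℝ ι => x i ^ 2)
    (ae_of_all _ fun x => sq_nonneg (x i)) (by fun_prop)]
  calc (∫⁻ x in l1Ball ι, ENNReal.ofReal (x i ^ 2)).toReal
      ≤ (ENNReal.ofReal (4 / ((Fintype.card ι + 1) * (Fintype.card ι + 2)))
          * volume (l1Ball ι)).toReal :=
        ENNReal.toReal_mono hfinite (lintegral_sq_coord_l1Ball_le i)
    _ = _ := by rw [ENNReal.toReal_mul, ENNReal.toReal_ofReal (by positivity), measureReal_def]

lemma integral_norm_sq_l1Ball_le :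
    ∫ x in l1Ball ι, ‖x‖ ^ 2 ≤ 4 / Fintype.card ι * volume.real (l1Ball ι) := by
  set n := Fintype.card ι
  have hint (i : ι) : IntegrableOn (fun x : EuclideanSpace ℝ ι => x i ^ 2) (l1Ball ι) :=
    (Continuous.continuousOn (by fun_prop)).integrableOn_compact isCompact_l1Ball
  have hconst : (n : ℝ) * (4 / ((n + 1) * (n + 2))) ≤ 4 / n := by
    rcases n.eq_zero_or_pos with hn | hn
    · simp [hn]
    · have hn' : (0 : ℝ) < n := by exact_mod_cast hn
      rw [mul_div_assoc', div_le_div_iff₀ (by positivity) hn']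
      nlinarith
  simp_rw [EuclideanSpace.real_norm_sq_eq]
  rw [integral_finsetSum _ fun i _ => hint i]
  calc ∑ i, ∫ x in l1Ball ι, x i ^ 2
      ≤ ∑ _i : ι, 4 / ((n + 1) * (n + 2)) * volume.real (l1Ball ι) :=
        Finset.sum_le_sum fun i _ => integral_sq_coord_l1Ball_le i
    _ = n * (4 / ((n + 1) * (n + 2))) * volume.real (l1Ball ι) := by
        rw [Finset.sum_const, Finset.card_univ, nsmul_eq_mul, mul_assoc]
    _ ≤ 4 / n * volume.real (l1Ball ι) := by gcongr

lemma setAverage_norm_sq_l1Ball_le : ⨍ x in l1Ball ι, ‖x‖ ^ 2 ≤ 4 / Fintype.card ι := by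
  have hvol : 0 < volume.real (l1Ball ι) :=
    ENNReal.toReal_pos volume_l1Ball_pos.ne' isCompact_l1Ball.measure_lt_top.ne
  rw [setAverage_eq, smul_eq_mul, inv_mul_le_iff₀ hvol]
  exact integral_norm_sq_l1Ball_le.trans_eq (mul_comm _ _)

theorem l1ball_expected_l2norm_general {d : ℕ} :
    ⨍ y in {x : EuclideanSpace ℝ (Fin d) | ∑ i, |x i| ≤ 1}, ‖y‖ ≤ 2 / Real.sqrt d := by
  change ⨍ y in l1Ball (Fin d), ‖y‖ ≤ 2 / √d
  have hjensen : (⨍ y in l1Ball (Fin d), ‖y‖) ^ 2 ≤ ⨍ y in l1Ball (Fin d), ‖y‖ ^ 2 :=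
    (convexOn_pow 2).map_set_average_le (continuousOn_pow 2) isClosed_Ici
      volume_l1Ball_pos.ne' isCompact_l1Ball.measure_lt_top.ne
      (ae_of_all _ fun y => norm_nonneg y)
      (continuous_norm.continuousOn.integrableOn_compact isCompact_l1Ball)
      ((continuous_norm.pow 2).continuousOn.integrableOn_compact isCompact_l1Ball)
  calc ⨍ y in l1Ball (Fin d), ‖y‖ ≤ √(⨍ y in l1Ball (Fin d), ‖y‖ ^ 2) :=
        (le_abs_self _).trans (Real.abs_le_sqrt hjensen)
    _ ≤ √(4 / d) := Real.sqrt_le_sqrt (by simpa using setAverage_norm_sq_l1Ball_le (ι := Fin d))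
    _ = 2 / √d := by rw [Real.sqrt_div' _ d.cast_nonneg, show (4 : ℝ) = 2 ^ 2 by norm_num,
        Real.sqrt_sq zero_le_two]

/-- Lemma 1 of Akhavan et al. 2022: If `ẽ` is uniform on the unit ℓ₁-ball
`B₁^d(1) = {x : Σ|xᵢ| ≤ 1}`, then `E[‖ẽ‖₂] ≤ 2/√d`. -/
theorem l1ball_expected_l2norm {d : ℕ} (hd : 0 < d) :
    ⨍ y in {x : EuclideanSpace ℝ (Fin d) | ∑ i, |x i| ≤ 1}, ‖y‖ ≤ 2 / Real.sqrt d :=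
  l1ball_expected_l2norm_general
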